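/- The local differential privacy guarantee of Subset Selection is tight: for any inputs z ≠ z' in Z and any size-d subset S ⊆ Z with z ∈ S and z' ∉ S, the output probabilities satisfy P_z(S) = e^ε · P_{z'}(S) exactly; moreover, for any subset S the ratio P_z(S)/P_{z'}(S) always lies in {e^{−ε}, 1, e^{ε}} (whenever the denominator is nonzero). -/

import Mathlib

/-!
Every output `S` of size `d` has one of two masses: `p / C(s-1, d-1)` when the input lies in `S`
and `(1 - p) / C(s-1, d)` when it does not. Their ratio is exactly `e^ε`, because
`p / (1 - p) = d e^ε / (s - d)` while `C(s-1, d) / C(s-1, d-1) = (s - d) / d`. Hence the ratio of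
the masses of `S` under two inputs is `e^ε`, `1` or `e^{-ε}` according to which inputs lie in `S`.
-/

/-- The parameter `d = ⌈s / (e^ε + 1)⌉` of the Subset Selection mechanism. -/
noncomputable def ssD (s : ℕ) (ε : ℝ) : ℕ := ⌈(s : ℝ) / (Real.exp ε + 1)⌉₊

/-- The parameter `p = d e^ε / (d e^ε + s - d)` of the Subset Selection mechanism. -/
noncomputable def ssp (s : ℕ) (ε : ℝ) : ℝ :=
  (ssD s ε : ℝ) * Real.exp ε / ((ssD s ε : ℝ) * Real.exp ε + (s : ℝ) - (ssD s ε : ℝ))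

/-- The probability mass `P_z(S)` of the Subset Selection mechanism with input `z`,
identifying the domain `{1, …, s}` with `Fin s`. -/
noncomputable def ssP (s : ℕ) (ε : ℝ) (z : Fin s) (S : Finset (Fin s)) : ℝ :=
  if S.card = ssD s ε then
    if z ∈ S then ssp s ε / ((s - 1).choose (ssD s ε - 1) : ℝ)
    else (1 - ssp s ε) / ((s - 1).choose (ssD s ε) : ℝ)
  else 0

open Real

lemma Nat.choose_mul_eq_choose_pred_mul {n k : ℕ} (hk : 0 < k) :
    n.choose k * k = n.choose (k - 1) * (n + 1 - k) := by
  obtain ⟨j, rfl⟩ := Nat.exists_eq_add_of_lt hk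
  simpa [Nat.add_sub_add_right] using Nat.choose_succ_right_eq n j

section

variable {s : ℕ} {ε : ℝ}

lemma ssD_pos (hs : 0 < s) : 0 < ssD s ε := by
  rw [ssD, Nat.ceil_pos]
  positivity

lemma ssD_lt (hs : 2 ≤ s) (hε : 0 ≤ ε) : ssD s ε < s := by
  suffices ssD s ε ≤ s - 1 by omega
  have hexp : 1 ≤ exp ε := one_le_exp hε
  have hs' : (2 : ℝ) ≤ s := by exact_mod_cast hs
  rw [ssD, Nat.ceil_le, Nat.cast_sub (by omega), Nat.cast_one, div_le_iff₀ (by positivity)]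
  nlinarith

lemma ssD_mul_exp_add_sub_pos (hs : 2 ≤ s) (hε : 0 ≤ ε) :
    0 < (ssD s ε : ℝ) * exp ε + s - ssD s ε := by
  have hds : (ssD s ε : ℝ) < s := by exact_mod_cast ssD_lt hs hε
  have : (0 : ℝ) ≤ ssD s ε * exp ε := by positivity
  linarith

lemma one_sub_ssp (hs : 2 ≤ s) (hε : 0 ≤ ε) :
    1 - ssp s ε = ((s : ℝ) - ssD s ε) / (ssD s ε * exp ε + s - ssD s ε) := by
  have hden := (ssD_mul_exp_add_sub_pos hs hε).ne'
  rw [ssp]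
  field_simp
  ring

lemma ssp_div_choose_eq_exp_mul (hs : 2 ≤ s) (hε : 0 ≤ ε) :
    ssp s ε / ((s - 1).choose (ssD s ε - 1) : ℝ) =
      exp ε * ((1 - ssp s ε) / ((s - 1).choose (ssD s ε) : ℝ)) := by
  have hd : 0 < ssD s ε := ssD_pos (by omega)
  have hds := ssD_lt hs hε
  have hchoose : ((s - 1).choose (ssD s ε) : ℝ) * ssD s ε =
      (s - 1).choose (ssD s ε - 1) * ((s : ℝ) - ssD s ε) := by
    have := Nat.choose_mul_eq_choose_pred_mul (n := s - 1) hd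
    rw [Nat.sub_add_cancel (by omega)] at this
    rw [← Nat.cast_sub hds.le]
    exact_mod_cast this
  have hA : ((s - 1).choose (ssD s ε - 1) : ℝ) ≠ 0 := by
    exact_mod_cast (Nat.choose_pos (by omega)).ne'
  have hB : ((s - 1).choose (ssD s ε) : ℝ) ≠ 0 := by
    exact_mod_cast (Nat.choose_pos (by omega)).ne'
  have hden := (ssD_mul_exp_add_sub_pos hs hε).ne'
  rw [one_sub_ssp hs hε, ssp]
  field_simp
  linear_combination hchoose

variable {z z' : Fin s} {S : Finset (Fin s)}

lemma ssP_eq_exp_mul_of_mem_of_notMem (hs : 2 ≤ s) (hε : 0 ≤ ε) (hS : S.card = ssD s ε)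
    (hz : z ∈ S) (hz' : z' ∉ S) : ssP s ε z S = exp ε * ssP s ε z' S := by
  simp only [ssP, if_pos hS, if_pos hz, if_neg hz']
  exact ssp_div_choose_eq_exp_mul hs hε

lemma ssP_eq_of_mem_iff (h : z ∈ S ↔ z' ∈ S) : ssP s ε z S = ssP s ε z' S := by
  simp only [ssP, h]

lemma card_eq_ssD_of_ssP_ne_zero (h : ssP s ε z S ≠ 0) : S.card = ssD s ε := by
  by_contra hS
  exact h (if_neg hS)

end

theorem subsetSelection_LDP_tight_general (s : ℕ) (hs : 2 ≤ s) (ε : ℝ) (hε : 0 < ε)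
    (z z' : Fin s) :
    (∀ S : Finset (Fin s), S.card = ssD s ε → z ∈ S → z' ∉ S →
      ssP s ε z S = Real.exp ε * ssP s ε z' S) ∧
    (∀ S : Finset (Fin s), ssP s ε z' S ≠ 0 →
      ssP s ε z S / ssP s ε z' S ∈ ({Real.exp (-ε), 1, Real.exp ε} : Set ℝ)) := by
  refine ⟨fun S hS hz hz' ↦ ssP_eq_exp_mul_of_mem_of_notMem hs hε.le hS hz hz', fun S hne ↦ ?_⟩
  have hS := card_eq_ssD_of_ssP_ne_zero hne
  simp only [Set.mem_insert_iff, Set.mem_singleton_iff]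
  by_cases hz : z ∈ S <;> by_cases hz' : z' ∈ S
  · exact Or.inr (Or.inl (by rw [ssP_eq_of_mem_iff (iff_of_true hz hz'), div_self hne]))
  · right; right
    rw [ssP_eq_exp_mul_of_mem_of_notMem hs hε.le hS hz hz', mul_div_cancel_right₀ _ hne]
  · left
    rw [ssP_eq_exp_mul_of_mem_of_notMem hs hε.le hS hz' hz] at hne ⊢
    rw [div_mul_cancel_right₀ (right_ne_zero_of_mul hne), exp_neg]
  · exact Or.inr (Or.inl (by rw [ssP_eq_of_mem_iff (iff_of_false hz hz'), div_self hne]))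

/-- The LDP guarantee of Subset Selection is tight: for inputs `z ≠ z'` and any
size-`d` subset `S` with `z ∈ S` and `z' ∉ S`, `P_z(S) = e^ε · P_{z'}(S)` exactly; moreover for
any subset `S` the ratio `P_z(S) / P_{z'}(S)` lies in `{e^{-ε}, 1, e^ε}` whenever the
denominator is nonzero. -/
theorem subsetSelection_LDP_tight (s : ℕ) (hs : 2 ≤ s) (ε : ℝ) (hε : 0 < ε)
    (z z' : Fin s) (hzz' : z ≠ z') :
    (∀ S : Finset (Fin s), S.card = ssD s ε → z ∈ S → z' ∉ S →
      ssP s ε z S = Real.exp ε * ssP s ε z' S) ∧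
    (∀ S : Finset (Fin s), ssP s ε z' S ≠ 0 →
      ssP s ε z S / ssP s ε z' S ∈ ({Real.exp (-ε), 1, Real.exp ε} : Set ℝ)) :=
  subsetSelection_LDP_tight_general s hs ε hε z z'
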